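/- arXiv:1602.08562 — 3 statements merged into one kernel-verified Lean document; each statement's English description precedes it below -/
import Mathlib

section
/- In H², the square of the area of a right hyperbolic triangle formula holds: for normalised proper points P, Q, R with (P∨Q)·(P∨R) = 0 (right angle at P), the quantity S defined by sin S = |P∨Q∨R| / (1 + |Q·R|) is well-defined, i.e. |P∨Q∨R| ≤ 1 + |Q·R|. -/
/-!
Put `B = P·Q` and `C = P·R`. The Lagrange identity `(P∨Q)·(P∨R) = (P·Q)(P·R) - (P·P)(Q·R)`
turns the right angle at `P` into hyperbolic Pythagoras, `Q·R = BC`. The matrix `M` with rows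
`P, Q, R` has `det M = P∨Q∨R`, and `M η Mᵀ` with `η = diag(1, -1, -1)` is the Gram matrix of the
three points, so `(P∨Q∨R)²` is their Gram determinant, which then equals
`(B² - 1)(C² - 1) ≤ (1 + |BC|)²`.
-/

open Matrix

namespace Minkowski

def form : Matrix (Fin 3) (Fin 3) ℝ := diagonal ![1, -1, -1]

def inner (u v : Fin 3 → ℝ) : ℝ := u 0 * v 0 - u 1 * v 1 - u 2 * v 2

theorem inner_comm (u v : Fin 3 → ℝ) : inner u v = inner v u := by
  simp only [inner]
  ring

def join (u v : Fin 3 → ℝ) : Fin 3 → ℝ :=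
  ![u 2 * v 0 - u 0 * v 2, u 0 * v 1 - u 1 * v 0, u 1 * v 2 - u 2 * v 1]

def lineInner (l m : Fin 3 → ℝ) : ℝ := l 0 * m 0 + l 1 * m 1 - l 2 * m 2

theorem lineInner_join_join (P Q R : Fin 3 → ℝ) :
    lineInner (join P Q) (join P R) = inner P Q * inner P R - inner P P * inner Q R := by
  simp only [lineInner, join, inner, cons_val_zero, cons_val_one, cons_val]
  ring

theorem det_form : form.det = 1 := by
  simp [form, det_diagonal, Fin.prod_univ_three]

theorem mul_form_mul_transpose_apply (M : Matrix (Fin 3) (Fin 3) ℝ) (i j : Fin 3) :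
    (M * form * Mᵀ) i j = inner (M i) (M j) := by
  rw [mul_apply, Fin.sum_univ_three]
  simp only [form, inner, mul_diagonal, transpose_apply, cons_val_zero, cons_val_one, cons_val]
  ring

theorem det_mul_form_mul_transpose (M : Matrix (Fin 3) (Fin 3) ℝ) :
    (M * form * Mᵀ).det = M.det ^ 2 := by
  rw [det_mul, det_mul, det_transpose, det_form]
  ring

theorem det_sq_of_normalized {M : Matrix (Fin 3) (Fin 3) ℝ} (h0 : inner (M 0) (M 0) = 1)
    (h1 : inner (M 1) (M 1) = 1) (h2 : inner (M 2) (M 2) = 1) :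
    M.det ^ 2 = 1 + 2 * inner (M 1) (M 2) * inner (M 0) (M 2) * inner (M 0) (M 1)
      - inner (M 1) (M 2) ^ 2 - inner (M 0) (M 2) ^ 2 - inner (M 0) (M 1) ^ 2 := by
  rw [← det_mul_form_mul_transpose, det_fin_three]
  simp only [mul_form_mul_transpose_apply, h0, h1, h2, inner_comm (M 1) (M 0),
    inner_comm (M 2) (M 0), inner_comm (M 2) (M 1)]
  ring

theorem inner_eq_mul_of_right_angle {P Q R : Fin 3 → ℝ} (hP : inner P P = 1)
    (hright : lineInner (join P Q) (join P R) = 0) : inner Q R = inner P Q * inner P R := by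
  rw [lineInner_join_join, hP] at hright
  linarith

theorem det_sq_of_right_angle {M : Matrix (Fin 3) (Fin 3) ℝ} (h0 : inner (M 0) (M 0) = 1)
    (h1 : inner (M 1) (M 1) = 1) (h2 : inner (M 2) (M 2) = 1)
    (hright : lineInner (join (M 0) (M 1)) (join (M 0) (M 2)) = 0) :
    M.det ^ 2 = (inner (M 0) (M 1) ^ 2 - 1) * (inner (M 0) (M 2) ^ 2 - 1) := by
  rw [det_sq_of_normalized h0 h1 h2, inner_eq_mul_of_right_angle h0 hright]
  ring

theorem abs_det_le_of_right_angle {M : Matrix (Fin 3) (Fin 3) ℝ} (h0 : inner (M 0) (M 0) = 1)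
    (h1 : inner (M 1) (M 1) = 1) (h2 : inner (M 2) (M 2) = 1)
    (hright : lineInner (join (M 0) (M 1)) (join (M 0) (M 2)) = 0) :
    |M.det| ≤ 1 + |inner (M 1) (M 2)| := by
  have hdet := det_sq_of_right_angle h0 h1 h2 hright
  rw [inner_eq_mul_of_right_angle h0 hright, abs_mul]
  refine abs_le_of_sq_le_sq ?_ (by positivity)
  nlinarith [sq_abs (inner (M 0) (M 1)), sq_abs (inner (M 0) (M 2)),
    abs_nonneg (inner (M 0) (M 1)), abs_nonneg (inner (M 0) (M 2))]

end Minkowski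

/-- In `H²`, for normalised proper points `P, Q, R` with a right angle at `P`
(`(P∨Q)·(P∨R) = 0`), the right-triangle area formula
`sin S = |P∨Q∨R| / (1 + |Q·R|)` is well defined:
`|P∨Q∨R| ≤ 1 + |Q·R|`. -/
theorem stmt_13 (pw px py qw qx qy rw rx ry : ℝ)
    (hP : pw ^ 2 - px ^ 2 - py ^ 2 = 1)
    (hQ : qw ^ 2 - qx ^ 2 - qy ^ 2 = 1)
    (hR : rw ^ 2 - rx ^ 2 - ry ^ 2 = 1)
    (hright :
      (py * qw - pw * qy) * (py * rw - pw * ry) +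
        (pw * qx - px * qw) * (pw * rx - px * rw) -
        (px * qy - py * qx) * (px * ry - py * rx) = 0) :
    |pw * (qx * ry - qy * rx) - px * (qw * ry - qy * rw) +
        py * (qw * rx - qx * rw)| ≤
      1 + |qw * rw - qx * rx - qy * ry| := by
  have key := Minkowski.abs_det_le_of_right_angle (M := !![pw, px, py; qw, qx, qy; rw, rx, ry])
    (by simpa [Minkowski.inner, sq] using hP) (by simpa [Minkowski.inner, sq] using hQ)
    (by simpa [Minkowski.inner, sq] using hR)
    (by simpa [Minkowski.lineInner, Minkowski.join] using hright)
  convert key using 2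
  · simp only [det_fin_three, of_apply, cons_val', cons_val_zero, cons_val_one, cons_val,
      cons_val_fin_one]
    ring
  · simp [Minkowski.inner]
end

section
/- In H³, every non-simple bivector Λ satisfies (Λ∧Λ)² < 0 (as a scalar), and hence Λ decomposes uniquely as a sum Λ = Λ₁ + Λ₂ of two commuting simple bivectors (axes) with Λ₁,₂² = ½(Λ·Λ ± √((Λ·Λ)² - (Λ∧Λ)²)), one of which is proper (Λ₁² < 0) and the other improper (Λ₂² > 0). -/
/-
Write a bivector as `Λ = Σₖ zₖ eₖe₀` with `zₖ = aₖ - i bₖ ∈ ℂ`, where `i` acts as the pseudoscalar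
`I = e₀e₁e₂e₃` (`e₂e₃ = -I e₁e₀` and cyclically). Then `ΛΛ' = z·z' - i (z × z')`, the first term
being a "complex scalar" `re + im I` and the second a bivector. Hence `Λ² = Λ·Λ + Λ∧Λ` is the
complex number `s = z·z`, `Λ` is simple iff `s` is real, and `Λ, Λ'` commute iff `z × z' = 0`.
So the two axes of `Λ` are `a z` and `(1 - a) z` for some `a ∈ ℂ`, and their squares `a² s` and
`(1 - a)² s` are prescribed as `(Re s ∓ |s|)/2`. Subtracting, `(1 - 2a) s = |s|` fixes `a`, and
conversely this `a` works because `|s|² = s s̄`. Independence of `1` and `I` (hence of the basis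
bivectors) comes from the injectivity of `ℝ → A`.
-/

/-- Bivector with coefficients `q = (p₁₀,p₂₀,p₃₀,p₂₃,p₃₁,p₁₂)` in the
Clifford model of `H³`. -/
def bivH3 {A : Type*} [Ring A] [Algebra ℝ A] (e0 e1 e2 e3 : A)
    (q : Fin 6 → ℝ) : A :=
  q 0 • (e1 * e0) + q 1 • (e2 * e0) + q 2 • (e3 * e0) +
    q 3 • (e2 * e3) + q 4 • (e3 * e1) + q 5 • (e1 * e2)

/-- Plücker expression `p₁₀p₂₃ + p₂₀p₃₁ + p₃₀p₁₂`; the bivector is simple iff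
it vanishes, and `Λ∧Λ = -2·pluckH3·I`. -/
def pluckH3 (q : Fin 6 → ℝ) : ℝ := q 0 * q 3 + q 1 * q 4 + q 2 * q 5

/-- Scalar part `Λ·Λ` of the square of the bivector with coefficients `q`. -/
def sqH3 (q : Fin 6 → ℝ) : ℝ :=
  q 0 ^ 2 + q 1 ^ 2 + q 2 ^ 2 - q 3 ^ 2 - q 4 ^ 2 - q 5 ^ 2

open Matrix

structure IsH3Frame {A : Type*} [Ring A] (e0 e1 e2 e3 : A) : Prop where
  sq0 : e0 * e0 = -1
  sq1 : e1 * e1 = 1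
  sq2 : e2 * e2 = 1
  sq3 : e3 * e3 = 1
  anticomm01 : e0 * e1 = -(e1 * e0)
  anticomm02 : e0 * e2 = -(e2 * e0)
  anticomm03 : e0 * e3 = -(e3 * e0)
  anticomm12 : e1 * e2 = -(e2 * e1)
  anticomm13 : e1 * e3 = -(e3 * e1)
  anticomm23 : e2 * e3 = -(e3 * e2)

section Ring

variable {R : Type*} [Ring R] {a b c : R}

lemma mul_mul_eq_neg_of_anticomm (h : a * b = -(b * a)) (x : R) :
    a * (b * x) = -(b * (a * x)) := by
  rw [← mul_assoc, h, neg_mul, mul_assoc]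

lemma mul_mul_of_mul_self_eq (h : a * a = c) (x : R) : a * (a * x) = c * x := by
  rw [← mul_assoc, h]

end Ring

-- `q ↦ a - i b` for `a = (p₁₀,p₂₀,p₃₀)`, `b = (p₂₃,p₃₁,p₁₂)`; the minus sign is what makes
-- `i` correspond to the pseudoscalar `e₀e₁e₂e₃`.
def cplxH3 : (Fin 6 → ℝ) ≃ₗ[ℝ] (Fin 3 → ℂ) where
  toFun q := ![⟨q 0, -q 3⟩, ⟨q 1, -q 4⟩, ⟨q 2, -q 5⟩]
  invFun z := ![(z 0).re, (z 1).re, (z 2).re, -(z 0).im, -(z 1).im, -(z 2).im]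
  map_add' x y := by ext i; fin_cases i <;> simp [Complex.ext_iff, add_comm]
  map_smul' c x := by ext i; fin_cases i <;> simp [Complex.ext_iff]
  left_inv q := by ext i; fin_cases i <;> simp
  right_inv z := by ext i; fin_cases i <;> simp

lemma cplxH3_dotProduct_self (q : Fin 6 → ℝ) :
    cplxH3 q ⬝ᵥ cplxH3 q = ⟨sqH3 q, -(2 * pluckH3 q)⟩ := by
  apply Complex.ext <;> simp [cplxH3, dotProduct, Fin.sum_univ_three, sqH3, pluckH3] <;> ring

lemma cplxH3_dotProduct_self_eq_ofReal_iff (q : Fin 6 → ℝ) (c : ℝ) :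
    cplxH3 q ⬝ᵥ cplxH3 q = c ↔ pluckH3 q = 0 ∧ sqH3 q = c := by
  simp [cplxH3_dotProduct_self, Complex.ext_iff, and_comm]

section Bivector

variable {A : Type*} [Ring A] [Algebra ℝ A] {e0 e1 e2 e3 : A}

lemma bivH3_mul_bivH3 (h : IsH3Frame e0 e1 e2 e3) (x y : Fin 6 → ℝ) :
    bivH3 e0 e1 e2 e3 x * bivH3 e0 e1 e2 e3 y =
      (cplxH3 x ⬝ᵥ cplxH3 y).re • 1 + (cplxH3 x ⬝ᵥ cplxH3 y).im • (e0 * e1 * e2 * e3) +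
        bivH3 e0 e1 e2 e3 (cplxH3.symm (-Complex.I • cplxH3 x ⨯₃ cplxH3 y)) := by
  simp only [bivH3, Fin.isValue, dotProduct, cplxH3, LinearEquiv.coe_mk, LinearMap.coe_mk,
    AddHom.coe_mk, Fin.sum_univ_three, cons_val_zero, cons_val_one, cons_val, Complex.add_re,
    Complex.mul_re, mul_neg, neg_mul, neg_neg, Complex.add_im, Complex.mul_im,
    LinearEquiv.symm_mk, cross_apply, Nat.succ_eq_add_one, Nat.reduceAdd, neg_smul, smul_cons,
    smul_eq_mul, smul_empty, neg_cons, neg_empty, Complex.neg_re, Complex.I_re, Complex.sub_re,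
    zero_mul, Complex.I_im, Complex.sub_im, one_mul, zero_sub, neg_sub, Complex.neg_im, zero_add]
  simp only [mul_add, add_mul, mul_neg, neg_mul, neg_neg, smul_mul_assoc, mul_smul_comm,
    mul_assoc, mul_mul_eq_neg_of_anticomm h.anticomm01, mul_mul_eq_neg_of_anticomm h.anticomm02,
    mul_mul_eq_neg_of_anticomm h.anticomm03, mul_mul_eq_neg_of_anticomm h.anticomm12,
    mul_mul_eq_neg_of_anticomm h.anticomm13, mul_mul_eq_neg_of_anticomm h.anticomm23,
    mul_mul_of_mul_self_eq h.sq1, mul_mul_of_mul_self_eq h.sq2, mul_mul_of_mul_self_eq h.sq3,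
    h.sq0, h.sq1, h.sq2, h.sq3, h.anticomm01, h.anticomm02, h.anticomm03, h.anticomm12,
    h.anticomm13, h.anticomm23, mul_one, one_mul, smul_neg]
  module

lemma bivH3_add (x y : Fin 6 → ℝ) :
    bivH3 e0 e1 e2 e3 (x + y) = bivH3 e0 e1 e2 e3 x + bivH3 e0 e1 e2 e3 y := by
  simp only [bivH3, Pi.add_apply, add_smul]
  abel

lemma bivH3_neg (x : Fin 6 → ℝ) : bivH3 e0 e1 e2 e3 (-x) = -bivH3 e0 e1 e2 e3 x := by
  simp only [bivH3, Pi.neg_apply, neg_smul]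
  abel

lemma bivH3_zero : bivH3 e0 e1 e2 e3 0 = 0 := by
  simp [bivH3]

lemma bivH3_sub (x y : Fin 6 → ℝ) :
    bivH3 e0 e1 e2 e3 (x - y) = bivH3 e0 e1 e2 e3 x - bivH3 e0 e1 e2 e3 y := by
  rw [sub_eq_add_neg, bivH3_add, bivH3_neg, sub_eq_add_neg]

lemma bivH3_mul_add_mul (h : IsH3Frame e0 e1 e2 e3) (x y : Fin 6 → ℝ) :
    bivH3 e0 e1 e2 e3 x * bivH3 e0 e1 e2 e3 y + bivH3 e0 e1 e2 e3 y * bivH3 e0 e1 e2 e3 x =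
      (2 : ℝ) • ((cplxH3 x ⬝ᵥ cplxH3 y).re • 1 +
        (cplxH3 x ⬝ᵥ cplxH3 y).im • (e0 * e1 * e2 * e3)) := by
  rw [bivH3_mul_bivH3 h, bivH3_mul_bivH3 h, dotProduct_comm (cplxH3 y), ← cross_anticomm,
    smul_neg, map_neg, bivH3_neg]
  module

lemma bivH3_mul_sub_mul (h : IsH3Frame e0 e1 e2 e3) (x y : Fin 6 → ℝ) :
    bivH3 e0 e1 e2 e3 x * bivH3 e0 e1 e2 e3 y - bivH3 e0 e1 e2 e3 y * bivH3 e0 e1 e2 e3 x =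
      bivH3 e0 e1 e2 e3 (cplxH3.symm ((-2 * Complex.I) • cplxH3 x ⨯₃ cplxH3 y)) := by
  have hcross : cplxH3.symm ((-2 * Complex.I) • cplxH3 x ⨯₃ cplxH3 y) =
      cplxH3.symm (-Complex.I • cplxH3 x ⨯₃ cplxH3 y) -
        cplxH3.symm (-Complex.I • cplxH3 y ⨯₃ cplxH3 x) := by
    rw [← map_sub, ← cross_anticomm]
    congr 1
    module
  rw [bivH3_mul_bivH3 h, bivH3_mul_bivH3 h, dotProduct_comm (cplxH3 y), hcross, bivH3_sub]
  abel

lemma eq_zero_of_re_smul_one_add_im_smul (hinj : Function.Injective (algebraMap ℝ A)) {J : A}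
    {s : ℂ} (h : s.re • (1 : A) + s.im • J = 0)
    (hI : (Complex.I * s).re • (1 : A) + (Complex.I * s).im • J = 0) : s = 0 := by
  simp only [Complex.mul_re, Complex.mul_im, Complex.I_re, Complex.I_im, zero_mul, one_mul,
    zero_sub, zero_add] at hI
  have hnorm : algebraMap ℝ A (Complex.normSq s) = algebraMap ℝ A 0 := by
    calc algebraMap ℝ A (Complex.normSq s)
        = s.re • (s.re • 1 + s.im • J) - s.im • (-s.im • 1 + s.re • J) := by
          rw [Algebra.algebraMap_eq_smul_one, Complex.normSq_apply]; module
      _ = algebraMap ℝ A 0 := by rw [h, hI]; simp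
  exact Complex.normSq_eq_zero.mp (hinj hnorm)

lemma bivH3_injective (h : IsH3Frame e0 e1 e2 e3) (hinj : Function.Injective (algebraMap ℝ A)) :
    Function.Injective (bivH3 e0 e1 e2 e3) := by
  intro x y hxy
  have hanti (w : Fin 3 → ℂ) : (cplxH3 (x - y) ⬝ᵥ w).re • (1 : A) +
      (cplxH3 (x - y) ⬝ᵥ w).im • (e0 * e1 * e2 * e3) = 0 := by
    have hsym := bivH3_mul_add_mul h (x - y) (cplxH3.symm w)
    rw [bivH3_sub, hxy, sub_self, zero_mul, mul_zero, add_zero, LinearEquiv.apply_symm_apply,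
      eq_comm, smul_eq_zero] at hsym
    exact hsym.resolve_left two_ne_zero
  have hdot (w : Fin 3 → ℂ) : cplxH3 (x - y) ⬝ᵥ w = 0 :=
    eq_zero_of_re_smul_one_add_im_smul hinj (hanti w) (by
      rw [← smul_eq_mul, ← dotProduct_smul]
      exact hanti _)
  rw [← sub_eq_zero, ← cplxH3.map_eq_zero_iff]
  exact dotProduct_eq_zero _ hdot

lemma bivH3_commute_iff (h : IsH3Frame e0 e1 e2 e3) (hinj : Function.Injective (algebraMap ℝ A))
    (x y : Fin 6 → ℝ) :
    bivH3 e0 e1 e2 e3 x * bivH3 e0 e1 e2 e3 y = bivH3 e0 e1 e2 e3 y * bivH3 e0 e1 e2 e3 x ↔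
      cplxH3 x ⨯₃ cplxH3 y = 0 := by
  rw [← sub_eq_zero, bivH3_mul_sub_mul h, (bivH3_injective h hinj).eq_iff' bivH3_zero,
    cplxH3.symm.map_eq_zero_iff, smul_eq_zero]
  simp [Complex.I_ne_zero]

end Bivector

lemma exists_smul_eq_of_add_eq_of_cross_eq_zero {K : Type*} [Field K] {x y z : Fin 3 → K}
    (hz : z ≠ 0) (hsum : x + y = z) (hxy : x ⨯₃ y = 0) : ∃ a : K, a • z = x := by
  have hzx : z ⨯₃ x = 0 := by
    rw [← hsum, map_add, LinearMap.add_apply, cross_self, ← cross_anticomm, hxy, neg_zero,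
      add_zero]
  have hdep : ¬LinearIndependent K ![z, x] := fun hli ↦
    crossProduct_ne_zero_iff_linearIndependent.mpr hli hzx
  simpa [LinearIndependent.pair_iff' hz] using hdep

-- Subtracting the two prescribed squares `a² s` and `(1 - a)² s` gives `(1 - 2a) s = ‖s‖`.
noncomputable def properAxisCoeff (s : ℂ) : ℂ := (s - ‖s‖) / (2 * s)

section properAxisCoeff

variable {s : ℂ}

lemma properAxisCoeff_sq_mul (hs : s ≠ 0) :
    properAxisCoeff s ^ 2 * s = ((s.re - ‖s‖) / 2 : ℝ) := by
  rw [properAxisCoeff]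
  push_cast
  field_simp
  linear_combination -Complex.mul_conj' s - 2 * s * Complex.re_eq_add_conj s

lemma one_sub_properAxisCoeff_sq_mul (hs : s ≠ 0) :
    (1 - properAxisCoeff s) ^ 2 * s = ((s.re + ‖s‖) / 2 : ℝ) := by
  rw [properAxisCoeff]
  push_cast
  field_simp
  linear_combination -Complex.mul_conj' s - 2 * s * Complex.re_eq_add_conj s

lemma eq_properAxisCoeff (hs : s ≠ 0) {a : ℂ} (h₁ : a ^ 2 * s = ((s.re - ‖s‖) / 2 : ℝ))
    (h₂ : (1 - a) ^ 2 * s = ((s.re + ‖s‖) / 2 : ℝ)) : a = properAxisCoeff s := by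
  rw [properAxisCoeff, eq_div_iff (mul_ne_zero two_ne_zero hs)]
  push_cast at h₁ h₂
  linear_combination h₁ - h₂

end properAxisCoeff

theorem existsUnique_commuting_split (z : Fin 3 → ℂ) (hs : z ⬝ᵥ z ≠ 0) :
    ∃! xy : (Fin 3 → ℂ) × (Fin 3 → ℂ), xy.1 + xy.2 = z ∧ xy.1 ⨯₃ xy.2 = 0 ∧
      xy.1 ⬝ᵥ xy.1 = (((z ⬝ᵥ z).re - ‖z ⬝ᵥ z‖) / 2 : ℝ) ∧
      xy.2 ⬝ᵥ xy.2 = (((z ⬝ᵥ z).re + ‖z ⬝ᵥ z‖) / 2 : ℝ) := by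
  have hz : z ≠ 0 := by
    rintro rfl
    simp at hs
  refine ⟨(properAxisCoeff (z ⬝ᵥ z) • z, (1 - properAxisCoeff (z ⬝ᵥ z)) • z),
    ⟨by module, by simp [cross_self], ?_, ?_⟩, ?_⟩
  · simp only [smul_dotProduct, dotProduct_smul, smul_eq_mul]
    rw [← properAxisCoeff_sq_mul hs]
    ring
  · simp only [smul_dotProduct, dotProduct_smul, smul_eq_mul]
    rw [← one_sub_properAxisCoeff_sq_mul hs]
    ring
  rintro ⟨x, y⟩ ⟨hsum, hxy, hx, hy⟩
  dsimp only at hsum hxy hx hy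
  obtain ⟨a, rfl⟩ := exists_smul_eq_of_add_eq_of_cross_eq_zero hz hsum hxy
  obtain rfl : y = (1 - a) • z := by
    rw [sub_smul, one_smul, eq_sub_iff_add_eq', hsum]
  simp only [smul_dotProduct, dotProduct_smul, smul_eq_mul, ← mul_assoc, ← sq] at hx hy
  rw [eq_properAxisCoeff hs hx hy]

/-- In `H³`, every non-simple bivector `Λ` satisfies `(Λ∧Λ)² < 0` (as a
scalar; `(Λ∧Λ)² = -(2·pluck)²` since `I² = -1`), and hence decomposes
uniquely as `Λ = Λ₁ + Λ₂`, a sum of two commuting simple bivectors with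
`Λ₁,₂² = ½(Λ·Λ ∓ √((Λ·Λ)² - (Λ∧Λ)²))`, with `Λ₁` proper (`Λ₁² < 0`) and `Λ₂`
improper (`Λ₂² > 0`). -/
theorem stmt_16 {A : Type*} [Ring A] [Algebra ℝ A] (e0 e1 e2 e3 : A)
    (h00 : e0 * e0 = -1) (h11 : e1 * e1 = 1) (h22 : e2 * e2 = 1)
    (h33 : e3 * e3 = 1)
    (h01 : e0 * e1 = -(e1 * e0)) (h02 : e0 * e2 = -(e2 * e0))
    (h03 : e0 * e3 = -(e3 * e0)) (h12 : e1 * e2 = -(e2 * e1))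
    (h13 : e1 * e3 = -(e3 * e1)) (h23 : e2 * e3 = -(e3 * e2))
    (hinj : Function.Injective (algebraMap ℝ A))
    (p : Fin 6 → ℝ) (hns : pluckH3 p ≠ 0) :
    -(2 * pluckH3 p) ^ 2 < 0 ∧
    ∃! q : (Fin 6 → ℝ) × (Fin 6 → ℝ),
      bivH3 e0 e1 e2 e3 q.1 + bivH3 e0 e1 e2 e3 q.2 = bivH3 e0 e1 e2 e3 p ∧
      bivH3 e0 e1 e2 e3 q.1 * bivH3 e0 e1 e2 e3 q.2 =
        bivH3 e0 e1 e2 e3 q.2 * bivH3 e0 e1 e2 e3 q.1 ∧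
      pluckH3 q.1 = 0 ∧ pluckH3 q.2 = 0 ∧
      sqH3 q.1 =
        (sqH3 p - Real.sqrt ((sqH3 p) ^ 2 + (2 * pluckH3 p) ^ 2)) / 2 ∧
      sqH3 q.2 =
        (sqH3 p + Real.sqrt ((sqH3 p) ^ 2 + (2 * pluckH3 p) ^ 2)) / 2 ∧
      sqH3 q.1 < 0 ∧ 0 < sqH3 q.2 := by
  have hF : IsH3Frame e0 e1 e2 e3 := ⟨h00, h11, h22, h33, h01, h02, h03, h12, h13, h23⟩
  have hK : 0 < (2 * pluckH3 p) ^ 2 := sq_pos_of_ne_zero (mul_ne_zero two_ne_zero hns)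
  set R := √(sqH3 p ^ 2 + (2 * pluckH3 p) ^ 2)
  have hnorm : ‖cplxH3 p ⬝ᵥ cplxH3 p‖ = R := by
    rw [cplxH3_dotProduct_self, Complex.norm_eq_sqrt_sq_add_sq, neg_sq]
  have hSR : sqH3 p < R := Real.lt_sqrt_of_sq_lt (by linarith)
  have hRS : -R < sqH3 p := Real.neg_sqrt_lt_of_sq_lt (by linarith)
  have hs : cplxH3 p ⬝ᵥ cplxH3 p ≠ 0 := by
    simp [cplxH3_dotProduct_self, Complex.ext_iff, hns]
  refine ⟨neg_neg_of_pos hK, ((cplxH3.toEquiv.prodCongr cplxH3.toEquiv).existsUnique_congr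
    fun q ↦ ?_).2 (existsUnique_commuting_split _ hs)⟩
  simp only [Equiv.prodCongr_apply, Prod.map_fst, Prod.map_snd, LinearEquiv.coe_toEquiv,
    ← map_add, cplxH3.injective.eq_iff, ← bivH3_add, (bivH3_injective hF hinj).eq_iff,
    bivH3_commute_iff hF hinj, cplxH3_dotProduct_self_eq_ofReal_iff, hnorm]
  rw [cplxH3_dotProduct_self]
  constructor
  · rintro ⟨hsum, hcomm, hpl₁, hpl₂, hsq₁, hsq₂, -, -⟩
    exact ⟨hsum, hcomm, ⟨hpl₁, hsq₁⟩, hpl₂, hsq₂⟩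
  · rintro ⟨hsum, hcomm, ⟨hpl₁, hsq₁⟩, hpl₂, hsq₂⟩
    exact ⟨hsum, hcomm, hpl₁, hpl₂, hsq₁, hsq₂, by linarith, by linarith⟩
end

section
/- In H³, if Λ·Λ = 0 (the scalar part of the square of the bivector Λ vanishes) then the axes of Λ are given by Λ₁,₂ = ½(1 ± I)Λ; moreover 1 + I and 1 - I are invertible with (1 ± I)⁻¹ = ½(1 ∓ I), since I² = -1. -/
/-!
Every generator anticommutes with the pseudoscalar `I = e₀e₁e₂e₃`, so `I` commutes with every
bivector `Λ`. Expanding, `Λ² = Λ·Λ - 2t I` with `t = p₁₀p₂₃ + p₂₀p₃₁ + p₃₀p₁₂`, so under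
`Λ·Λ = 0` the square `Λ²` is the multiple `-2t I` of the pseudoscalar. Since `I² = -1` we have
`(1 + I)(1 - I) = (1 - I)(1 + I) = 2` and `(1 ± I)² = ±2I`; as `1 ± I` commute with `Λ`,
`Λ₁² = ¼ (1 + I)² Λ² = t` and `Λ₂² = ¼ (1 - I)² Λ² = -t`, while `Λ₁Λ₂ = Λ₂Λ₁ = ½ Λ²`.
-/

section Ring

variable {A : Type*} [Ring A]

theorem one_add_mul_one_sub {I : A} (hI : I * I = -1) : (1 + I) * (1 - I) = 2 := by
  rw [← (Commute.one_left I).mul_self_sub_mul_self_eq, hI]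
  norm_num

theorem one_sub_mul_one_add {I : A} (hI : I * I = -1) : (1 - I) * (1 + I) = 2 := by
  rw [← (Commute.one_left I).mul_self_sub_mul_self_eq', hI]
  norm_num

theorem mul_mul_of_anticomm {a b : A} (h : a * b = -(b * a)) (x : A) :
    b * (a * x) = -(a * (b * x)) := by
  rw [← mul_assoc, ← mul_assoc, h, neg_mul, neg_neg]

theorem commute_mul_of_anticomm {a x y : A} (hx : a * x = -(x * a)) (hy : a * y = -(y * a)) :
    Commute a (x * y) := by
  rw [Commute, SemiconjBy, ← mul_assoc, hx, neg_mul, mul_assoc, hy, mul_neg, neg_neg, mul_assoc]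

structure IsLorentzFrame (e0 e1 e2 e3 : A) : Prop where
  sq0 : e0 * e0 = -1
  sq1 : e1 * e1 = 1
  sq2 : e2 * e2 = 1
  sq3 : e3 * e3 = 1
  anticomm01 : e0 * e1 = -(e1 * e0)
  anticomm02 : e0 * e2 = -(e2 * e0)
  anticomm03 : e0 * e3 = -(e3 * e0)
  anticomm12 : e1 * e2 = -(e2 * e1)
  anticomm13 : e1 * e3 = -(e3 * e1)
  anticomm23 : e2 * e3 = -(e3 * e2)

namespace IsLorentzFrame

variable {e0 e1 e2 e3 : A}

/-- Together with `mul_assoc`, these rules let `simp` rewrite any product of generators to a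
signed product with strictly increasing indices. -/
theorem normalize (h : IsLorentzFrame e0 e1 e2 e3) :
    (e1 * e0 = -(e0 * e1) ∧ e2 * e0 = -(e0 * e2) ∧ e3 * e0 = -(e0 * e3) ∧
      e2 * e1 = -(e1 * e2) ∧ e3 * e1 = -(e1 * e3) ∧ e3 * e2 = -(e2 * e3)) ∧
    (∀ x, e1 * (e0 * x) = -(e0 * (e1 * x))) ∧ (∀ x, e2 * (e0 * x) = -(e0 * (e2 * x))) ∧
    (∀ x, e3 * (e0 * x) = -(e0 * (e3 * x))) ∧ (∀ x, e2 * (e1 * x) = -(e1 * (e2 * x))) ∧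
    (∀ x, e3 * (e1 * x) = -(e1 * (e3 * x))) ∧ (∀ x, e3 * (e2 * x) = -(e2 * (e3 * x))) ∧
    (e0 * e0 = -1 ∧ e1 * e1 = 1 ∧ e2 * e2 = 1 ∧ e3 * e3 = 1) ∧
    (∀ x, e0 * (e0 * x) = -x) ∧ (∀ x, e1 * (e1 * x) = x) ∧
    (∀ x, e2 * (e2 * x) = x) ∧ (∀ x, e3 * (e3 * x) = x) := by
  refine ⟨⟨(neg_eq_iff_eq_neg.mpr h.anticomm01).symm, (neg_eq_iff_eq_neg.mpr h.anticomm02).symm,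
    (neg_eq_iff_eq_neg.mpr h.anticomm03).symm, (neg_eq_iff_eq_neg.mpr h.anticomm12).symm,
    (neg_eq_iff_eq_neg.mpr h.anticomm13).symm, (neg_eq_iff_eq_neg.mpr h.anticomm23).symm⟩,
    mul_mul_of_anticomm h.anticomm01, mul_mul_of_anticomm h.anticomm02,
    mul_mul_of_anticomm h.anticomm03, mul_mul_of_anticomm h.anticomm12,
    mul_mul_of_anticomm h.anticomm13, mul_mul_of_anticomm h.anticomm23,
    ⟨h.sq0, h.sq1, h.sq2, h.sq3⟩, fun x => ?_, fun x => ?_, fun x => ?_, fun x => ?_⟩ <;>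
  rw [← mul_assoc]
  · rw [h.sq0, neg_one_mul]
  · rw [h.sq1, one_mul]
  · rw [h.sq2, one_mul]
  · rw [h.sq3, one_mul]

theorem pseudoscalar_mul_self (h : IsLorentzFrame e0 e1 e2 e3) :
    e0 * e1 * e2 * e3 * (e0 * e1 * e2 * e3) = -1 := by
  simp only [mul_assoc, h.normalize, mul_neg, neg_neg]

theorem anticomm_pseudoscalar (h : IsLorentzFrame e0 e1 e2 e3) :
    let I := e0 * e1 * e2 * e3
    I * e0 = -(e0 * I) ∧ I * e1 = -(e1 * I) ∧ I * e2 = -(e2 * I) ∧ I * e3 = -(e3 * I) := by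
  simp only [mul_assoc, h.normalize, mul_neg, neg_neg, mul_one, and_self]

end IsLorentzFrame

end Ring

section Algebra

variable {A : Type*} [Ring A] [Algebra ℝ A]

theorem half_smul_two : (1 / 2 : ℝ) • (2 : A) = 1 := by
  rw [Algebra.smul_def, ← map_ofNat (algebraMap ℝ A) 2, ← map_mul]
  norm_num

theorem mul_half_smul_eq_one {J K : A} (h : J * K = 2) : J * ((1 / 2 : ℝ) • K) = 1 := by
  rw [mul_smul_comm, h, half_smul_two]

theorem half_smul_mul_eq_one {J K : A} (h : K * J = 2) : ((1 / 2 : ℝ) • K) * J = 1 := by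
  rw [smul_mul_assoc, h, half_smul_two]

section Axes

variable {I : A}

theorem one_add_mul_self (hI : I * I = -1) : (1 + I) * (1 + I) = (2 : ℝ) • I := by
  rw [add_mul, mul_add, mul_add, hI, one_mul, mul_one, one_mul]
  module

theorem one_sub_mul_self (hI : I * I = -1) : (1 - I) * (1 - I) = (-2 : ℝ) • I := by
  rw [sub_mul, mul_sub, mul_sub, hI, one_mul, mul_one, one_mul]
  module

noncomputable def axisPos (I Λ : A) : A := (1 / 2 : ℝ) • ((1 + I) * Λ)

noncomputable def axisNeg (I Λ : A) : A := (1 / 2 : ℝ) • ((1 - I) * Λ)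

theorem axisPos_add_axisNeg (I Λ : A) : axisPos I Λ + axisNeg I Λ = Λ := by
  rw [axisPos, axisNeg, add_mul, sub_mul, one_mul]
  module

variable {Λ : A}

theorem commute_axisPos_axisNeg (hΛ : Commute I Λ) : Commute (axisPos I Λ) (axisNeg I Λ) := by
  have hpos : Commute (1 + I) Λ := (Commute.one_left Λ).add_left hΛ
  have hneg : Commute (1 - I) Λ := (Commute.one_left Λ).sub_left hΛ
  have hposneg : Commute (1 + I) (1 - I) :=
    (Commute.one_right _).sub_right ((Commute.one_left I).add_left (Commute.refl I))
  have h : Commute ((1 + I) * Λ) ((1 - I) * Λ) :=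
    (hposneg.mul_right hpos).mul_left (hneg.symm.mul_right (Commute.refl Λ))
  exact (h.smul_left _).smul_right _

theorem axisPos_mul_self (hI : I * I = -1) (hΛ : Commute I Λ) {t : ℝ}
    (hsq : Λ * Λ = (-2 * t) • I) : axisPos I Λ * axisPos I Λ = algebraMap ℝ A t := by
  rw [axisPos, smul_mul_smul_comm, ((Commute.one_left Λ).add_left hΛ).symm.mul_mul_mul_comm,
    one_add_mul_self hI, hsq, smul_mul_smul_comm, hI, Algebra.algebraMap_eq_smul_one]
  module

theorem axisNeg_mul_self (hI : I * I = -1) (hΛ : Commute I Λ) {t : ℝ}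
    (hsq : Λ * Λ = (-2 * t) • I) : axisNeg I Λ * axisNeg I Λ = algebraMap ℝ A (-t) := by
  rw [axisNeg, smul_mul_smul_comm, ((Commute.one_left Λ).sub_left hΛ).symm.mul_mul_mul_comm,
    one_sub_mul_self hI, hsq, smul_mul_smul_comm, hI, Algebra.algebraMap_eq_smul_one]
  module

end Axes

def bivector (e0 e1 e2 e3 : A) (p10 p20 p30 p23 p31 p12 : ℝ) : A :=
  p10 • (e1 * e0) + p20 • (e2 * e0) + p30 • (e3 * e0) +
    p23 • (e2 * e3) + p31 • (e3 * e1) + p12 • (e1 * e2)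

namespace IsLorentzFrame

variable {e0 e1 e2 e3 : A}

theorem commute_pseudoscalar_bivector (h : IsLorentzFrame e0 e1 e2 e3)
    (p10 p20 p30 p23 p31 p12 : ℝ) :
    Commute (e0 * e1 * e2 * e3) (bivector e0 e1 e2 e3 p10 p20 p30 p23 p31 p12) := by
  obtain ⟨h0, h1, h2, h3⟩ := h.anticomm_pseudoscalar
  unfold bivector
  repeat' apply Commute.add_right
  all_goals apply Commute.smul_right
  exacts [commute_mul_of_anticomm h1 h0, commute_mul_of_anticomm h2 h0,
    commute_mul_of_anticomm h3 h0, commute_mul_of_anticomm h2 h3,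
    commute_mul_of_anticomm h3 h1, commute_mul_of_anticomm h1 h2]

theorem bivector_mul_self (h : IsLorentzFrame e0 e1 e2 e3) (p10 p20 p30 p23 p31 p12 : ℝ) :
    bivector e0 e1 e2 e3 p10 p20 p30 p23 p31 p12 * bivector e0 e1 e2 e3 p10 p20 p30 p23 p31 p12 =
      algebraMap ℝ A (p10 ^ 2 + p20 ^ 2 + p30 ^ 2 - p23 ^ 2 - p31 ^ 2 - p12 ^ 2) +
        (-2 * (p10 * p23 + p20 * p31 + p30 * p12)) • (e0 * e1 * e2 * e3) := by
  simp only [bivector, Algebra.algebraMap_eq_smul_one, mul_assoc, mul_add, add_mul, smul_mul_assoc,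
    mul_smul_comm, h.normalize, mul_neg, neg_mul, neg_neg, smul_neg]
  module

end IsLorentzFrame

end Algebra

/-- In `H³`, if the scalar part `Λ·Λ` of the square of the bivector `Λ`
vanishes, then the axes of `Λ` are `Λ₁,₂ = ½(1 ± I)Λ`: they are simple (their
squares are purely scalar, namely `±(p₁₀p₂₃+p₂₀p₃₁+p₃₀p₁₂)`), they commute
and sum to `Λ`; moreover `I² = -1`, so `1 + I` and `1 - I` are invertible
with `(1 ± I)⁻¹ = ½(1 ∓ I)`. -/
theorem stmt_17 {A : Type*} [Ring A] [Algebra ℝ A] (e0 e1 e2 e3 : A)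
    (h00 : e0 * e0 = -1) (h11 : e1 * e1 = 1) (h22 : e2 * e2 = 1)
    (h33 : e3 * e3 = 1)
    (h01 : e0 * e1 = -(e1 * e0)) (h02 : e0 * e2 = -(e2 * e0))
    (h03 : e0 * e3 = -(e3 * e0)) (h12 : e1 * e2 = -(e2 * e1))
    (h13 : e1 * e3 = -(e3 * e1)) (h23 : e2 * e3 = -(e3 * e2))
    (p10 p20 p30 p23 p31 p12 : ℝ)
    (hdot : p10 ^ 2 + p20 ^ 2 + p30 ^ 2 - p23 ^ 2 - p31 ^ 2 - p12 ^ 2 = 0)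
    (I Λ L1 L2 : A)
    (hI : I = e0 * e1 * e2 * e3)
    (hΛ : Λ = p10 • (e1 * e0) + p20 • (e2 * e0) + p30 • (e3 * e0) +
        p23 • (e2 * e3) + p31 • (e3 * e1) + p12 • (e1 * e2))
    (hL1 : L1 = (1 / 2 : ℝ) • ((1 + I) * Λ))
    (hL2 : L2 = (1 / 2 : ℝ) • ((1 - I) * Λ)) :
    I * I = -1 ∧
    (1 + I) * ((1 / 2 : ℝ) • (1 - I)) = 1 ∧
    ((1 / 2 : ℝ) • (1 - I)) * (1 + I) = 1 ∧
    (1 - I) * ((1 / 2 : ℝ) • (1 + I)) = 1 ∧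
    ((1 / 2 : ℝ) • (1 + I)) * (1 - I) = 1 ∧
    L1 + L2 = Λ ∧
    L1 * L2 = L2 * L1 ∧
    L1 * L1 = algebraMap ℝ A (p10 * p23 + p20 * p31 + p30 * p12) ∧
    L2 * L2 = algebraMap ℝ A (-(p10 * p23 + p20 * p31 + p30 * p12)) := by
  have hF : IsLorentzFrame e0 e1 e2 e3 := ⟨h00, h11, h22, h33, h01, h02, h03, h12, h13, h23⟩
  have hII : I * I = -1 := hI ▸ hF.pseudoscalar_mul_self
  have hcomm : Commute I Λ := hI ▸ hΛ ▸ hF.commute_pseudoscalar_bivector p10 p20 p30 p23 p31 p12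
  have hsq : Λ * Λ = (-2 * (p10 * p23 + p20 * p31 + p30 * p12)) • I := by
    have := hF.bivector_mul_self p10 p20 p30 p23 p31 p12
    rw [hdot, map_zero, zero_add, ← hI] at this
    rwa [hΛ]
  subst hL1 hL2
  exact ⟨hII, mul_half_smul_eq_one (one_add_mul_one_sub hII),
    half_smul_mul_eq_one (one_sub_mul_one_add hII), mul_half_smul_eq_one (one_sub_mul_one_add hII),
    half_smul_mul_eq_one (one_add_mul_one_sub hII), axisPos_add_axisNeg I Λ,
    (commute_axisPos_axisNeg hcomm).eq, axisPos_mul_self hII hcomm hsq,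
    axisNeg_mul_self hII hcomm hsq⟩
end
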